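/- arXiv:1810.03591 — 3 statements merged into one kernel-verified Lean document; each statement's English description precedes it below -/
import Mathlib

section
/- For a chi-squared random variable U with D degrees of freedom and any x > 0, the probability that U - D exceeds 2*sqrt(D*x) + 2*x is at most exp(-x). -/
/-!
Chernoff's method. For a standard Gaussian `Y` and `t < 1/2`, `E[exp (t Y²)] = (1 - 2t)^(-1/2)`,
so independence gives `P(U ≥ ε) ≤ exp (-t ε) (1 - 2t)^(-D/2)`. Writing `x = D s²` and taking
`ε = D (1 + 2s + 2s²)`, the choice `1 - 2t = (1 + 2s + 2s²)⁻¹` makes this bound equal to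
`exp (-D (s + s²)) (1 + 2s + 2s²)^(D/2)`, and `1 + 2s + 2s² ≤ exp (2s)` bounds it by `exp (-D s²)`.
-/

open MeasureTheory ProbabilityTheory Real

lemma integral_exp_mul_sq_gaussianReal {t : ℝ} (ht : t < 1 / 2) :
    ∫ y, exp (t * y ^ 2) ∂gaussianReal 0 1 = (√(1 - 2 * t))⁻¹ := by
  have hdensity : ∀ y : ℝ, gaussianPDFReal 0 1 y • exp (t * y ^ 2)
      = (√(2 * π))⁻¹ * exp (-(1 / 2 - t) * y ^ 2) := fun y => by
    rw [gaussianPDFReal, smul_eq_mul, NNReal.coe_one, mul_one, mul_assoc, ← exp_add]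
    ring_nf
  simp_rw [integral_gaussianReal_eq_integral_smul one_ne_zero, hdensity, integral_const_mul,
    integral_gaussian]
  rw [← sqrt_inv, ← sqrt_mul (by positivity), ← sqrt_inv]
  congr 1
  have : 1 / 2 - t ≠ 0 := by linarith
  have : 1 - 2 * t ≠ 0 := by linarith
  field_simp

section SumOfSquares

variable {Ω : Type*} [MeasurableSpace Ω] {μ : Measure Ω}

lemma aemeasurable_of_map_eq_gaussianReal {X : Ω → ℝ} {m : ℝ} {v : NNReal}
    (hX : μ.map X = gaussianReal m v) : AEMeasurable X μ :=
  .of_map_ne_zero (by rw [hX]; exact IsProbabilityMeasure.ne_zero _)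

lemma mgf_sq_of_map_eq_gaussianReal {X : Ω → ℝ} (hX : μ.map X = gaussianReal 0 1) {t : ℝ}
    (ht : t < 1 / 2) : mgf (fun ω => X ω ^ 2) μ t = (√(1 - 2 * t))⁻¹ := by
  rw [mgf, ← integral_map (f := fun y => exp (t * y ^ 2))
    (aemeasurable_of_map_eq_gaussianReal hX) (by fun_prop), hX,
    integral_exp_mul_sq_gaussianReal ht]

lemma measureReal_sum_sq_ge_le_exp_mul {ι : Type*} [Fintype ι]
    {X : ι → Ω → ℝ} (hindep : iIndepFun X μ) (hlaw : ∀ i, μ.map (X i) = gaussianReal 0 1)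
    (ε : ℝ) {t : ℝ} (ht₀ : 0 ≤ t) (ht : t < 1 / 2) :
    μ.real {ω | ε ≤ ∑ i, X i ω ^ 2} ≤
      exp (-t * ε) * (√(1 - 2 * t))⁻¹ ^ Fintype.card ι := by
  have := hindep.isProbabilityMeasure
  have hsq : iIndepFun (fun i ω => X i ω ^ 2) μ :=
    hindep.comp (fun _ y => y ^ 2) fun _ => by fun_prop
  have hmgf : mgf (∑ i, fun ω => X i ω ^ 2) μ t = (√(1 - 2 * t))⁻¹ ^ Fintype.card ι := by
    rw [hsq.mgf_sum₀ fun i => (aemeasurable_of_map_eq_gaussianReal (hlaw i)).pow_const 2]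
    simp [mgf_sq_of_map_eq_gaussianReal (hlaw _) ht]
  -- A non-integrable function has integral `0`, whereas this mgf is positive.
  have hint : Integrable (fun ω => exp (t * (∑ i, fun ω => X i ω ^ 2) ω)) μ := by
    have : 0 < 1 - 2 * t := by linarith
    exact mgf_pos_iff.mp (hmgf ▸ by positivity)
  simpa [hmgf] using measure_ge_le_exp_mul_mgf ε ht₀ hint

lemma measureReal_sum_sq_ge_le_exp {ι : Type*} [Fintype ι]
    {X : ι → Ω → ℝ} (hindep : iIndepFun X μ) (hlaw : ∀ i, μ.map (X i) = gaussianReal 0 1)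
    {s : ℝ} (hs : 0 ≤ s) :
    μ.real {ω | Fintype.card ι * (1 + 2 * s + 2 * s ^ 2) ≤ ∑ i, X i ω ^ 2} ≤
      exp (-(Fintype.card ι * s ^ 2)) := by
  set n := Fintype.card ι
  set q := 1 + 2 * s + 2 * s ^ 2
  have hq : 0 < q := by positivity
  set t := (s + s ^ 2) / q
  have htq : t * q = s + s ^ 2 := div_mul_cancel₀ _ hq.ne'
  have hinv : (√(1 - 2 * t))⁻¹ = √q := by
    rw [← sqrt_inv,
      eq_inv_of_mul_eq_one_left (a := 1 - 2 * t) (b := q) (by linear_combination -2 * htq), inv_inv]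
  have hsqrt_le : √q ≤ exp s := by
    rw [sqrt_le_iff, ← exp_nat_mul]
    refine ⟨(exp_pos s).le, le_of_eq_of_le ?_ (quadratic_le_exp_of_nonneg (by positivity))⟩
    push_cast
    ring
  calc μ.real {ω | n * q ≤ ∑ i, X i ω ^ 2}
      ≤ exp (-t * (n * q)) * (√(1 - 2 * t))⁻¹ ^ n :=
        measureReal_sum_sq_ge_le_exp_mul hindep hlaw _ (by positivity)
          (by rw [div_lt_iff₀ hq]; nlinarith)
    _ = exp (-(n * (s + s ^ 2))) * √q ^ n := by
        rw [hinv, show -t * (n * q) = -(n * (s + s ^ 2)) by linear_combination -(n : ℝ) * htq]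
    _ ≤ exp (-(n * (s + s ^ 2))) * exp s ^ n := by gcongr
    _ = exp (-(n * s ^ 2)) := by rw [← exp_nat_mul, ← exp_add]; ring_nf

end SumOfSquares

theorem laurent_massart_general {Ω : Type*} [MeasurableSpace Ω] (μ : Measure Ω)
    (D : ℕ) (hD : 1 ≤ D) (X : Fin D → Ω → ℝ)
    (hindep : iIndepFun X μ)
    (hlaw : ∀ i, μ.map (X i) = gaussianReal 0 1)
    (x : ℝ) (hx : 0 < x) :
    μ {ω | 2 * Real.sqrt ((D : ℝ) * x) + 2 * x ≤ (∑ i, (X i ω) ^ 2) - (D : ℝ)} ≤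
      ENNReal.ofReal (Real.exp (-x)) := by
  have := hindep.isProbabilityMeasure
  have hD₀ : (0 : ℝ) < D := by exact_mod_cast hD
  set s := √(x / D)
  have hx_eq : D * s ^ 2 = x := by
    rw [sq_sqrt (div_pos hx hD₀).le, mul_div_cancel₀ _ hD₀.ne']
  have hsqrt_eq : √(D * x) = D * s := by
    rw [← hx_eq, show (D : ℝ) * (D * s ^ 2) = (D * s) * (D * s) by ring,
      sqrt_mul_self (by positivity)]
  have hthreshold : 2 * √(D * x) + 2 * x + D = D * (1 + 2 * s + 2 * s ^ 2) := by
    rw [hsqrt_eq, ← hx_eq]; ring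
  have hset : {ω | 2 * √(D * x) + 2 * x ≤ (∑ i, X i ω ^ 2) - D}
      = {ω | D * (1 + 2 * s + 2 * s ^ 2) ≤ ∑ i, X i ω ^ 2} := by
    ext ω
    rw [Set.mem_ofPred_eq, Set.mem_ofPred_eq, le_sub_iff_add_le, hthreshold]
  have hbound := measureReal_sum_sq_ge_le_exp hindep hlaw (s := s) (sqrt_nonneg _)
  rw [Fintype.card_fin, hx_eq] at hbound
  rw [hset, ← ofReal_measureReal]
  gcongr

/-- Laurent–Massart tail inequality: for a chi-squared random variable `U` with
`D ≥ 1` degrees of freedom (i.e. `U = Σ_{i<D} (X i)²` for i.i.d. standard Gaussian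
`X i`) and any `x > 0`, we have `P(U - D ≥ 2√(Dx) + 2x) ≤ exp(-x)`. -/
theorem laurent_massart {Ω : Type*} [MeasurableSpace Ω] (μ : Measure Ω)
    [IsProbabilityMeasure μ] (D : ℕ) (hD : 1 ≤ D) (X : Fin D → Ω → ℝ)
    (hmeas : ∀ i, Measurable (X i))
    (hindep : iIndepFun X μ)
    (hlaw : ∀ i, μ.map (X i) = gaussianReal 0 1)
    (x : ℝ) (hx : 0 < x) :
    μ {ω | 2 * Real.sqrt ((D : ℝ) * x) + 2 * x ≤ (∑ i, (X i ω) ^ 2) - (D : ℝ)} ≤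
      ENNReal.ofReal (Real.exp (-x)) :=
  laurent_massart_general μ D hD X hindep hlaw x hx
end

section
/- Let Z_1, ..., Z_n be i.i.d. N(0, σ²) random variables. Then for any ε > 0, the probability that max over 0 ≤ i < j ≤ n of (Z_{i+1} + ... + Z_j)²/(j-i) exceeds 2(1+ε)σ² log n tends to 0 as n → ∞. -/
/-!
Every `Z i` is `v`-sub-Gaussian, so a block sum over `ℓ` indices exceeds `C √ℓ` with probability
at most `2 exp (-C² / 2v)`, which is `2 n^-(1+η)` for `C² = 2 (1 + η) v log n`. A union bound over
all `i < j ≤ n` would cost a factor `n²`, too much. Instead we only control the dyadic blocks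
`(q 2^t, (q + r) 2^t]` with `r ≤ 4m`, of which there are `O(m n)`, so the union bound gives
`O(m n^-η) → 0`. Any interval `(i, j]` consists of one such block of length at most `j - i` and
two end pieces of length at most `2^t ≤ (j - i) / 2m`; bounding the ends by induction on the length
bounds the sum over `(i, j]` by `K C √(j - i)` with `K = 1 + O(1/√m)`, and `K² (1 + η) ≤ 1 + ε`
for suitable `m, η`.
-/

open MeasureTheory ProbabilityTheory Filter Real
open scoped NNReal

section SubGaussian

variable {Ω : Type*} [MeasurableSpace Ω] {μ : Measure Ω}

lemma hasSubgaussianMGF_of_map_eq_gaussianReal {X : Ω → ℝ} {v : ℝ≥0}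
    (hX : μ.map X = gaussianReal 0 v) : HasSubgaussianMGF X v μ := by
  have hXm : AEMeasurable X μ := aemeasurable_of_map_neZero (by rw [hX]; infer_instance)
  rw [← HasSubgaussianMGF.id_map_iff hXm, hX]
  exact ⟨integrable_exp_mul_gaussianReal, fun t ↦ by simp [mgf_id_gaussianReal]⟩

lemma ProbabilityTheory.HasSubgaussianMGF.measure_abs_ge_le [IsFiniteMeasure μ] {X : Ω → ℝ}
    {c : ℝ≥0} (h : HasSubgaussianMGF X c μ) {x : ℝ} (hx : 0 ≤ x) :
    μ.real {ω | x ≤ |X ω|} ≤ 2 * exp (-x ^ 2 / (2 * c)) := by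
  have hsub : {ω | x ≤ |X ω|} ⊆ {ω | x ≤ X ω} ∪ {ω | x ≤ (-X) ω} :=
    fun ω (hω : x ≤ |X ω|) ↦ le_abs.mp hω
  calc μ.real {ω | x ≤ |X ω|} ≤ μ.real {ω | x ≤ X ω} + μ.real {ω | x ≤ (-X) ω} :=
        (measureReal_mono hsub).trans (measureReal_union_le _ _)
    _ ≤ 2 * exp (-x ^ 2 / (2 * c)) := by
        linarith [h.measure_ge_le hx, h.neg.measure_ge_le hx]

lemma measureReal_lt_abs_sum_Ioc_le [IsFiniteMeasure μ] {Z : ℕ → Ω → ℝ} {v : ℝ≥0}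
    (hindep : iIndepFun Z μ) (hZ : ∀ i, HasSubgaussianMGF (Z i) v μ) (a : ℕ) {ℓ : ℕ}
    (hℓ : 0 < ℓ) {C : ℝ} (hC : 0 ≤ C) :
    μ.real {ω | C * √(ℓ : ℝ) < |∑ i ∈ Finset.Ioc a (a + ℓ), Z i ω|}
      ≤ 2 * exp (-C ^ 2 / (2 * v)) := by
  have hsum := HasSubgaussianMGF.sum_of_iIndepFun hindep (s := Finset.Ioc a (a + ℓ))
    fun i _ ↦ hZ i
  calc _ ≤ μ.real {ω | C * √(ℓ : ℝ) ≤ |∑ i ∈ Finset.Ioc a (a + ℓ), Z i ω|} :=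
        measureReal_mono fun _ ↦ le_of_lt (α := ℝ)
    _ ≤ 2 * exp (-(C * √(ℓ : ℝ)) ^ 2 / (2 * ∑ i ∈ Finset.Ioc a (a + ℓ), v)) :=
        hsum.measure_abs_ge_le (by positivity)
    _ = 2 * exp (-C ^ 2 / (2 * v)) := by
        rw [mul_pow, sq_sqrt (Nat.cast_nonneg _), Finset.sum_const, Nat.card_Ioc,
          Nat.add_sub_cancel_left, nsmul_eq_mul, NNReal.coe_mul, NNReal.coe_natCast]
        field_simp

end SubGaussian

lemma exists_grid_block {g i j : ℕ} (hg : 0 < g) (h : i + 2 * g ≤ j) :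
    ∃ q r : ℕ, 1 ≤ r ∧ i ≤ q * g ∧ q * g ≤ i + g ∧ (q + r) * g ≤ j ∧
      j ≤ (q + r) * g + g := by
  have hi := Nat.div_add_mod' i g
  have hi' := Nat.mod_lt i hg
  have hj := Nat.div_add_mod' j g
  have hj' := Nat.mod_lt j hg
  have hq : (i / g + 1) * g = i / g * g + g := add_one_mul _ _
  have hqp : i / g + 1 < j / g := Nat.lt_of_mul_lt_mul_right (a := g) (by omega)
  refine ⟨i / g + 1, j / g - (i / g + 1), by omega, by omega, by omega, ?_⟩
  rw [Nat.add_sub_cancel' hqp.le]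
  omega

lemma exists_two_pow_mul_le_lt {a ℓ : ℕ} (ha : 0 < a) (h : a ≤ ℓ) :
    ∃ t, a * 2 ^ t ≤ ℓ ∧ ℓ < 2 * a * 2 ^ t := by
  refine ⟨Nat.log 2 (ℓ / a), ?_, ?_⟩
  · rw [mul_comm, ← Nat.le_div_iff_mul_le ha]
    exact Nat.pow_log_le_self 2 (Nat.div_pos h ha).ne'
  · have := Nat.lt_pow_succ_log_self (b := 2) (by norm_num) (ℓ / a)
    rw [Nat.div_lt_iff_lt_mul ha, pow_succ] at this
    linarith

lemma exists_dyadic_block {m i j : ℕ} (hm : 0 < m) (h : 4 * m < j - i) :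
    ∃ t q r : ℕ, 1 ≤ r ∧ r ≤ 4 * m ∧ i ≤ q * 2 ^ t ∧ q * 2 ^ t ≤ i + 2 ^ t ∧
      q * 2 ^ t + r * 2 ^ t ≤ j ∧ j ≤ q * 2 ^ t + r * 2 ^ t + 2 ^ t ∧
      2 * m * 2 ^ t ≤ j - i := by
  obtain ⟨t, hlow, hhigh⟩ := exists_two_pow_mul_le_lt (a := 2 * m) (ℓ := j - i) (by omega) (by omega)
  have hgm : 2 ^ t ≤ m * 2 ^ t := Nat.le_mul_of_pos_left _ hm
  have hlow' : 2 * (m * 2 ^ t) ≤ j - i := by linarith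
  have hhigh' : j - i < 4 * (m * 2 ^ t) := by linarith
  obtain ⟨q, r, hr, hiq, hqi, hrj, hjr⟩ := exists_grid_block (i := i) (j := j) (Nat.two_pow_pos t) (by omega)
  rw [add_mul] at hrj hjr
  have hr4 : r * 2 ^ t < 4 * m * 2 ^ t := by rw [mul_assoc]; omega
  exact ⟨t, q, r, hr, (Nat.lt_of_mul_lt_mul_right hr4).le, hiq, hqi, hrj, hjr, hlow⟩

theorem abs_sum_Ioc_le_of_dyadic_blocks (z : ℕ → ℝ) {n m : ℕ} {C K : ℝ} (hm : 0 < m)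
    (hC : 0 ≤ C) (hK0 : 0 ≤ K) (hK : 1 + 2 * K / √(2 * m) ≤ K)
    (hblock : ∀ t q r : ℕ, 1 ≤ r → r ≤ 4 * m → q * 2 ^ t + r * 2 ^ t ≤ n →
      |∑ k ∈ Finset.Ioc (q * 2 ^ t) (q * 2 ^ t + r * 2 ^ t), z k| ≤ C * √(r * 2 ^ t : ℕ))
    {i j : ℕ} (hij : i ≤ j) (hjn : j ≤ n) :
    |∑ k ∈ Finset.Ioc i j, z k| ≤ K * C * √(j - i : ℕ) := by
  have hK1 : 1 ≤ K := le_trans (le_add_of_nonneg_right (by positivity)) hK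
  induction hℓ : j - i using Nat.strong_induction_on generalizing i j with
  | _ ℓ ih =>
  rcases le_or_gt ℓ (4 * m) with hsmall | hbig
  · rcases Nat.eq_zero_or_pos ℓ with h0 | h0
    · rw [Finset.Ioc_eq_empty (by omega), Finset.sum_empty, abs_zero]
      positivity
    · have h := hblock 0 i (j - i) (by omega) (by omega) (by omega)
      simp only [pow_zero, mul_one, Nat.add_sub_cancel' hij] at h
      rw [hℓ] at h
      rw [mul_assoc]
      exact h.trans (le_mul_of_one_le_left (by positivity) hK1)
  · obtain ⟨t, q, r, hr, hr4, hiq, hqi, hrj, hjr, hlow⟩ :=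
      exists_dyadic_block (i := i) (j := j) hm (by omega)
    set g := 2 ^ t
    rw [hℓ] at hlow
    have hgℓ : g < ℓ := by nlinarith [Nat.two_pow_pos t]
    have hside : ∀ {a b : ℕ}, a ≤ b → b ≤ n → b - a ≤ g →
        |∑ k ∈ Finset.Ioc a b, z k| ≤ K * C * √(g : ℝ) := fun hab hbn hg' ↦
      (ih _ (by omega) hab hbn rfl).trans (by gcongr)
    have hg_le : √(g : ℝ) ≤ √(ℓ : ℝ) / √(2 * m) := by
      rw [le_div_iff₀ (by positivity), ← Real.sqrt_mul (by positivity)]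
      exact Real.sqrt_le_sqrt (by rw [mul_comm]; exact_mod_cast hlow)
    have hmain := hblock t q r hr hr4 (hrj.trans hjn)
    rw [← Finset.sum_Ioc_consecutive _ (by omega : i ≤ q * g + r * g) hrj,
      ← Finset.sum_Ioc_consecutive _ hiq (by omega : q * g ≤ q * g + r * g)]
    calc _ ≤ |∑ k ∈ Finset.Ioc i (q * g), z k|
            + |∑ k ∈ Finset.Ioc (q * g) (q * g + r * g), z k|
            + |∑ k ∈ Finset.Ioc (q * g + r * g) j, z k| := abs_add_three _ _ _
      _ ≤ K * C * √(g : ℝ) + C * √(ℓ : ℝ) + K * C * √(g : ℝ) := by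
        gcongr
        · exact hside hiq (by omega) (by omega)
        · exact hmain.trans (by gcongr; show r * g ≤ ℓ; omega)
        · exact hside hrj hjn (by omega)
      _ ≤ C * √(ℓ : ℝ) * (1 + 2 * K / √(2 * m)) := by
        have : K * C * √(g : ℝ) ≤ C * √(ℓ : ℝ) * (K / √(2 * m)) :=
          calc K * C * √(g : ℝ) ≤ K * C * (√(ℓ : ℝ) / √(2 * m)) := by gcongr
            _ = C * √(ℓ : ℝ) * (K / √(2 * m)) := by ring
        linarith [show C * √(ℓ : ℝ) * (1 + 2 * K / √(2 * m))
          = C * √(ℓ : ℝ) + 2 * (C * √(ℓ : ℝ) * (K / √(2 * m))) by ring]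
      _ ≤ C * √(ℓ : ℝ) * K := mul_le_mul_of_nonneg_left hK (by positivity)
      _ = K * C * √(ℓ : ℝ) := by ring

theorem sq_sum_Ioc_div_le_of_dyadic_blocks (z : ℕ → ℝ) {n m : ℕ} {C K : ℝ} (hm : 0 < m)
    (hC : 0 ≤ C) (hK0 : 0 ≤ K) (hK : 1 + 2 * K / √(2 * m) ≤ K)
    (hblock : ∀ t q r : ℕ, 1 ≤ r → r ≤ 4 * m → q * 2 ^ t + r * 2 ^ t ≤ n →
      |∑ k ∈ Finset.Ioc (q * 2 ^ t) (q * 2 ^ t + r * 2 ^ t), z k| ≤ C * √(r * 2 ^ t : ℕ))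
    {i j : ℕ} (hij : i < j) (hjn : j ≤ n) :
    (∑ k ∈ Finset.Ioc i j, z k) ^ 2 / ((j : ℝ) - i) ≤ K ^ 2 * C ^ 2 := by
  have hℓ : ((j - i : ℕ) : ℝ) = (j : ℝ) - i := Nat.cast_sub hij.le
  have hℓpos : (0 : ℝ) < (j : ℝ) - i := by rw [← hℓ]; exact_mod_cast Nat.sub_pos_of_lt hij
  have h := abs_sum_Ioc_le_of_dyadic_blocks z hm hC hK0 hK hblock hij.le hjn
  rw [div_le_iff₀ hℓpos, ← sq_abs]
  calc |∑ k ∈ Finset.Ioc i j, z k| ^ 2 ≤ (K * C * √(j - i : ℕ)) ^ 2 := by gcongr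
    _ = K ^ 2 * C ^ 2 * ((j : ℝ) - i) := by
      rw [mul_pow, sq_sqrt (Nat.cast_nonneg _), hℓ]
      ring

theorem setOf_exists_sq_sum_Ioc_div_gt_subset {Ω : Type*} (Z : ℕ → Ω → ℝ) {m n : ℕ}
    {c C K : ℝ} (hm : 0 < m) (hC : 0 ≤ C) (hK0 : 0 ≤ K) (hK : 1 + 2 * K / √(2 * m) ≤ K)
    (hc : K ^ 2 * C ^ 2 ≤ c) :
    {ω | ∃ i j : ℕ, i < j ∧ j ≤ n ∧ c < (∑ k ∈ Finset.Ioc i j, Z k ω) ^ 2 / ((j : ℝ) - i)} ⊆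
      ⋃ t ∈ Finset.range (n + 1), ⋃ q ∈ Finset.range (n / 2 ^ t + 1),
        ⋃ r ∈ Finset.Icc 1 (4 * m), {ω | C * √(r * 2 ^ t : ℕ) <
          |∑ k ∈ Finset.Ioc (q * 2 ^ t) (q * 2 ^ t + r * 2 ^ t), Z k ω|} := by
  rintro ω ⟨i, j, hij, hjn, hgt⟩
  by_contra hgood
  simp only [Set.mem_iUnion, not_exists] at hgood
  refine hgt.not_ge (le_trans ?_ hc)
  refine sq_sum_Ioc_div_le_of_dyadic_blocks (Z · ω) hm hC hK0 hK
    (fun t q r hr1 hr4 hle ↦ not_lt.mp ?_) hij hjn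
  have h2t : 2 ^ t ≤ n := le_trans (Nat.le_mul_of_pos_left _ hr1) (by omega)
  refine hgood t (Finset.mem_range_succ_iff.mpr (Nat.lt_two_pow_self.trans_le h2t).le) q ?_ r
    (Finset.mem_Icc.mpr ⟨hr1, hr4⟩)
  exact Finset.mem_range_succ_iff.mpr ((Nat.le_div_iff_mul_le (by positivity)).mpr (by omega))

lemma measureReal_biUnion_dyadic_le {Ω : Type*} [MeasurableSpace Ω] {μ : Measure Ω}
    [IsFiniteMeasure μ] (A : ℕ → ℕ → ℕ → Set Ω) {p : ℝ} (hp : 0 ≤ p) (m n : ℕ)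
    (hA : ∀ t q r, 1 ≤ r → μ.real (A t q r) ≤ p) :
    μ.real (⋃ t ∈ Finset.range (n + 1), ⋃ q ∈ Finset.range (n / 2 ^ t + 1),
        ⋃ r ∈ Finset.Icc 1 (4 * m), A t q r) ≤ (3 * n + 1) * (4 * m) * p := by
  have hcount : ∑ t ∈ Finset.range (n + 1), (n / 2 ^ t + 1) ≤ 3 * n + 1 := by
    rw [Finset.sum_add_distrib, Finset.sum_const, Finset.card_range, smul_eq_mul, mul_one]
    have := Nat.geom_sum_le le_rfl n (n + 1)
    omega
  calc _ ≤ ∑ t ∈ Finset.range (n + 1), ∑ q ∈ Finset.range (n / 2 ^ t + 1),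
        ∑ r ∈ Finset.Icc 1 (4 * m), μ.real (A t q r) := by
        refine (measureReal_biUnion_finset_le _ _).trans (Finset.sum_le_sum fun t _ ↦ ?_)
        refine (measureReal_biUnion_finset_le _ _).trans (Finset.sum_le_sum fun q _ ↦ ?_)
        exact measureReal_biUnion_finset_le _ _
    _ ≤ ∑ t ∈ Finset.range (n + 1), ∑ q ∈ Finset.range (n / 2 ^ t + 1),
        ∑ r ∈ Finset.Icc 1 (4 * m), p := by
        gcongr with t _ q _ r hr
        exact hA t q r (Finset.mem_Icc.mp hr).1
    _ = ((∑ t ∈ Finset.range (n + 1), (n / 2 ^ t + 1) : ℕ) : ℝ) * (4 * m) * p := by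
        rw [Nat.cast_sum, Finset.sum_mul, Finset.sum_mul]
        refine Finset.sum_congr rfl fun t _ ↦ ?_
        simp only [Finset.sum_const, Finset.card_range, Nat.card_Icc, nsmul_eq_mul]
        push_cast
        ring
    _ ≤ (3 * n + 1) * (4 * m) * p := by
        gcongr
        exact_mod_cast hcount

theorem measureReal_exists_sq_sum_Ioc_div_gt_le {Ω : Type*} [MeasurableSpace Ω]
    {μ : Measure Ω} [IsProbabilityMeasure μ] {v : ℝ≥0} (hv : 0 < v) {Z : ℕ → Ω → ℝ}
    (hindep : iIndepFun Z μ) (hZ : ∀ i, HasSubgaussianMGF (Z i) v μ) {ε η K : ℝ} {m n : ℕ}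
    (hm : 0 < m) (hη : 0 ≤ η) (hK0 : 0 ≤ K) (hK : 1 + 2 * K / √(2 * m) ≤ K)
    (hKε : K ^ 2 * (1 + η) ≤ 1 + ε) (hn : 1 ≤ n) :
    μ.real {ω | ∃ i j : ℕ, i < j ∧ j ≤ n ∧
        2 * (1 + ε) * v * log n < (∑ k ∈ Finset.Ioc i j, Z k ω) ^ 2 / ((j : ℝ) - i)}
      ≤ 32 * m * (n : ℝ) ^ (-η) := by
  have hn0 : (0 : ℝ) < n := by exact_mod_cast hn
  have hlog : 0 ≤ log n := log_nonneg (by exact_mod_cast hn)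
  set C := √(2 * (1 + η) * v * log n)
  have hC2 : C ^ 2 = 2 * (1 + η) * v * log n := sq_sqrt (by positivity)
  have hKC : K ^ 2 * C ^ 2 ≤ 2 * (1 + ε) * v * log n := by
    rw [hC2]
    calc K ^ 2 * (2 * (1 + η) * v * log n) = K ^ 2 * (1 + η) * (2 * v * log n) := by ring
      _ ≤ (1 + ε) * (2 * v * log n) := by gcongr
      _ = 2 * (1 + ε) * v * log n := by ring
  have hblock : 2 * exp (-C ^ 2 / (2 * v)) = 2 * (n : ℝ)⁻¹ * (n : ℝ) ^ (-η) := by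
    have hexp : -C ^ 2 / (2 * v) = log n * (-1) + log n * (-η) := by
      rw [hC2]
      field_simp
      ring
    rw [hexp, exp_add, ← rpow_def_of_pos hn0, ← rpow_def_of_pos hn0, rpow_neg_one, mul_assoc]
  calc _ ≤ _ := measureReal_mono
        (setOf_exists_sq_sum_Ioc_div_gt_subset Z hm (sqrt_nonneg _) hK0 hK hKC)
        (measure_ne_top _ _)
    _ ≤ (3 * n + 1) * (4 * m) * (2 * (n : ℝ)⁻¹ * (n : ℝ) ^ (-η)) :=
        measureReal_biUnion_dyadic_le _ (by positivity) m n fun t q r hr ↦ hblock ▸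
          measureReal_lt_abs_sum_Ioc_le hindep hZ _ (by positivity) (sqrt_nonneg _)
    _ ≤ (4 * n) * (4 * m) * (2 * (n : ℝ)⁻¹ * (n : ℝ) ^ (-η)) := by
        gcongr
        linarith [(by exact_mod_cast hn : (1 : ℝ) ≤ n)]
    _ = 32 * m * (n : ℝ) ^ (-η) := by
        field_simp
        ring

lemma exists_chaining_constants {ε : ℝ} (hε : 0 < ε) :
    ∃ m : ℕ, 0 < m ∧ ∃ K η : ℝ, 0 < η ∧ 0 ≤ K ∧ 1 + 2 * K / √(2 * m) ≤ K ∧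
      K ^ 2 * (1 + η) ≤ 1 + ε := by
  set δ := min (ε / 7) 1
  have hδ : 0 < δ := lt_min (by positivity) one_pos
  have hδ1 : δ ≤ 1 := min_le_right _ _
  have hδε : δ ≤ ε / 7 := min_le_left _ _
  obtain ⟨m, hm⟩ := exists_nat_gt ((4 / δ) ^ 2)
  have hm0 : 0 < m := by exact_mod_cast (sq_nonneg _).trans_lt hm
  have hsqrt : 4 / δ ≤ √(2 * m) := Real.le_sqrt_of_sq_le (by linarith)
  refine ⟨m, hm0, 1 + δ, δ, hδ, by positivity, ?_, ?_⟩
  · calc 1 + 2 * (1 + δ) / √(2 * m) ≤ 1 + 4 / (4 / δ) := by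
          gcongr
          linarith
      _ = 1 + δ := by field_simp
  · nlinarith [mul_pos hδ hδ]

theorem yao_lemma1_general {Ω : Type*} [MeasurableSpace Ω] (μ : Measure Ω)
    [IsProbabilityMeasure μ] (v : NNReal) (hv : 0 < v)
    (Z : ℕ → Ω → ℝ)
    (hindep : iIndepFun Z μ)
    (hlaw : ∀ i, μ.map (Z i) = gaussianReal 0 v)
    (ε : ℝ) (hε : 0 < ε) :
    Tendsto (fun n : ℕ =>
      μ {ω | ∃ i j : ℕ, i < j ∧ j ≤ n ∧
        2 * (1 + ε) * (v : ℝ) * Real.log n <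
          (∑ t ∈ Finset.Ioc i j, Z t ω) ^ 2 / ((j : ℝ) - (i : ℝ))})
      atTop (nhds 0) := by
  obtain ⟨m, hm, K, η, hη, hK0, hK, hKε⟩ := exists_chaining_constants hε
  have hZ i : HasSubgaussianMGF (Z i) v μ := hasSubgaussianMGF_of_map_eq_gaussianReal (hlaw i)
  have hlim : Tendsto (fun n : ℕ ↦ ENNReal.ofReal (32 * m * (n : ℝ) ^ (-η))) atTop (nhds 0) := by
    simpa using ENNReal.tendsto_ofReal
      (((tendsto_rpow_neg_atTop hη).comp tendsto_natCast_atTop_atTop).const_mul (32 * m : ℝ))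
  refine tendsto_of_tendsto_of_tendsto_of_le_of_le' tendsto_const_nhds hlim
    (Eventually.of_forall fun _ ↦ zero_le) ?_
  filter_upwards [eventually_ge_atTop 1] with n hn
  rw [← ofReal_measureReal (measure_ne_top _ _)]
  exact ENNReal.ofReal_le_ofReal
    (measureReal_exists_sq_sum_Ioc_div_gt_le hv hindep hZ hm hη.le hK0 hK hKε hn)

/-- Yao (1988), Lemma 1. Let `Z 1, Z 2, ...` be i.i.d. `N(0, σ²)` random variables
(variance `v = σ² > 0`). For any `ε > 0`, the probability that the maximum over
`0 ≤ i < j ≤ n` of `(Z_{i+1} + ... + Z_j)²/(j-i)` exceeds `2(1+ε)σ² log n` tends to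
`0` as `n → ∞`. -/
theorem yao_lemma1 {Ω : Type*} [MeasurableSpace Ω] (μ : Measure Ω)
    [IsProbabilityMeasure μ] (v : NNReal) (hv : 0 < v)
    (Z : ℕ → Ω → ℝ) (hmeas : ∀ i, Measurable (Z i))
    (hindep : iIndepFun Z μ)
    (hlaw : ∀ i, μ.map (Z i) = gaussianReal 0 v)
    (ε : ℝ) (hε : 0 < ε) :
    Tendsto (fun n : ℕ =>
      μ {ω | ∃ i j : ℕ, i < j ∧ j ≤ n ∧
        2 * (1 + ε) * (v : ℝ) * Real.log n <
          (∑ t ∈ Finset.Ioc i j, Z t ω) ^ 2 / ((j : ℝ) - (i : ℝ))})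
      atTop (nhds 0) :=
  yao_lemma1_general μ v hv Z hindep hlaw ε hε
end

section
/- Let the data have a single mean change of size μ ≠ 0 at time τ, with Gaussian N(0,σ²) noise. For a window of half-length c = c(n) = ⌈(log n)^{1+α}⌉ centered at τ, the normalized excess residual sum of squares of the null fit, (RSS(y_{τ-c+1:τ+c}; ∅) − Σ Z_j²)/c, converges in probability to μ²/2 as n → ∞. Consequently, for any fixed penalty multiple K, the cost reduction from fitting the true changepoint within this window eventually exceeds K·log n with probability tending to 1. -/
open MeasureTheory ProbabilityTheory Filter

/-- The signal-plus-noise observation on a window of `2c` points centred at the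
changepoint: the first `c` points have mean `0` and the last `c` points mean `μ0`. -/
noncomputable def Ysig (μ0 : ℝ) (c : ℕ) (Z : ℕ → ℝ) (i : ℕ) : ℝ :=
  (if c < i then μ0 else 0) + Z i

/-- Residual sum of squares of the null fit (a single common mean) on the window
`i = 1, ..., 2c`. -/
noncomputable def RSS0 (μ0 : ℝ) (c : ℕ) (Z : ℕ → ℝ) : ℝ :=
  ∑ i ∈ Finset.Icc 1 (2 * c),
    (Ysig μ0 c Z i - (∑ j ∈ Finset.Icc 1 (2 * c), Ysig μ0 c Z j) / (2 * (c : ℝ))) ^ 2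

/-- Residual sum of squares when the true changepoint (at the middle of the window)
is fitted: a separate mean on each half of the window.  Since each half of the data
has constant signal, this equals the corresponding RSS of the noise. -/
noncomputable def RSS1 (c : ℕ) (Z : ℕ → ℝ) : ℝ :=
  (∑ i ∈ Finset.Icc 1 c, (Z i - (∑ j ∈ Finset.Icc 1 c, Z j) / (c : ℝ)) ^ 2) +
    ∑ i ∈ Finset.Ioc c (2 * c),
      (Z i - (∑ j ∈ Finset.Ioc c (2 * c), Z j) / (c : ℝ)) ^ 2

/-- The window half-length `c(n) = ⌈(log n)^(1+α)⌉`. -/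
noncomputable def cwin (α : ℝ) (n : ℕ) : ℕ :=
  ⌈(Real.log n) ^ ((1 : ℝ) + α)⌉₊

/-! Write `A`, `B` for the means of the noise on the two halves of the window. The excess RSS of
the null fit is exactly `c (μ0²/2 + μ0 (B - A) - (A + B)²/2)`, and by Chebyshev's inequality
`A, B → 0` in probability as soon as `c → ∞`, so the normalized excess tends to `μ0²/2`.
Fitting the true changepoint only subtracts the nonnegative terms `c A² + c B²` from the noise
sum of squares, so the cost reduction is at least `c μ0²/4` with probability tending to one,
and `c(n) = ⌈(log n)^(1+α)⌉` eventually beats `K log n`. -/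

open Finset Real
open scoped ENNReal NNReal Topology

namespace MeasureTheory.TendstoInMeasure

variable {α ι E F : Type*} [MeasurableSpace α] {μ : Measure α} {l : Filter ι}

theorem prodMk [PseudoEMetricSpace E] [PseudoEMetricSpace F] {f : ι → α → E} {g : ι → α → F}
    {f' : α → E} {g' : α → F} (hf : TendstoInMeasure μ f l f')
    (hg : TendstoInMeasure μ g l g') :
    TendstoInMeasure μ (fun i x => (f i x, g i x)) l fun x => (f' x, g' x) := by
  intro ε hε
  have hsum := (hf ε hε).add (hg ε hε)
  rw [add_zero] at hsum
  refine tendsto_of_tendsto_of_tendsto_of_le_of_le tendsto_const_nhds hsum (fun _ => zero_le)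
    fun i => (measure_mono fun x hx => ?_).trans (measure_union_le _ _)
  simpa [Prod.edist_eq, le_max_iff] using hx

theorem comp_continuousAt_const [PseudoMetricSpace E] [PseudoMetricSpace F] {f : ι → α → E}
    {a : E} {φ : E → F} (hf : TendstoInMeasure μ f l fun _ => a) (hφ : ContinuousAt φ a) :
    TendstoInMeasure μ (fun i x => φ (f i x)) l fun _ => φ a := by
  rw [tendstoInMeasure_iff_dist] at hf ⊢
  intro ε hε
  obtain ⟨η, hη, hφη⟩ := Metric.continuousAt_iff.mp hφ ε hε
  refine tendsto_of_tendsto_of_tendsto_of_le_of_le tendsto_const_nhds (hf η hη)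
    (fun _ => zero_le) fun i => measure_mono fun x hx => ?_
  by_contra hfar
  exact (hφη (not_le.mp hfar)).not_ge hx

theorem tendsto_measure_lt_abs_sub {f : ι → α → ℝ} {a : ℝ}
    (h : TendstoInMeasure μ f l fun _ => a) {δ : ℝ} (hδ : 0 < δ) :
    Tendsto (fun i => μ {x | δ < |f i x - a|}) l (𝓝 0) :=
  tendsto_of_tendsto_of_tendsto_of_le_of_le tendsto_const_nhds
    (tendstoInMeasure_iff_dist.mp h δ hδ) (fun _ => zero_le)
    fun _ => measure_mono fun _ hx => by simpa [Real.dist_eq] using hx.le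

end MeasureTheory.TendstoInMeasure

theorem tendsto_measure_one_of_compl_subset {Ω ι : Type*} [MeasurableSpace Ω] {μ : Measure Ω}
    [IsProbabilityMeasure μ] {l : Filter ι} {A B : ι → Set Ω}
    (hB : Tendsto (fun i => μ (B i)) l (𝓝 0)) (hAB : ∀ᶠ i in l, (B i)ᶜ ⊆ A i) :
    Tendsto (fun i => μ (A i)) l (𝓝 1) := by
  have hlower : Tendsto (fun i => 1 - μ (B i)) l (𝓝 1) := by
    simpa [Function.comp_def] using
      ((ENNReal.continuous_sub_left ENNReal.one_ne_top).tendsto 0).comp hB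
  refine tendsto_of_tendsto_of_tendsto_of_le_of_le' hlower tendsto_const_nhds ?_
    (Eventually.of_forall fun _ => prob_le_one)
  filter_upwards [hAB] with i hi
  rw [tsub_le_iff_left]
  calc (1 : ℝ≥0∞) = μ (B i ∪ (B i)ᶜ) := by rw [Set.union_compl_self, measure_univ]
    _ ≤ μ (B i) + μ (A i) := (measure_union_le _ _).trans (by gcongr)

section WeakLaw

variable {Ω β : Type*} [MeasurableSpace Ω] {μ : Measure Ω} [IsFiniteMeasure μ]
  {Z : β → Ω → ℝ} {v : ℝ}

theorem meas_ge_abs_sum_le_card_mul_div_sq (hL2 : ∀ i, MemLp (Z i) 2 μ) (hmean : ∀ i, μ[Z i] = 0)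
    (hvar : ∀ i, variance (Z i) μ ≤ v) (hindep : Pairwise fun i j => IndepFun (Z i) (Z j) μ)
    (s : Finset β) {ε : ℝ} (hε : 0 < ε) :
    μ {ω | ε ≤ |∑ i ∈ s, Z i ω|} ≤ ENNReal.ofReal (#s * v / ε ^ 2) := by
  have hmeanS : ∫ ω, ∑ i ∈ s, Z i ω ∂μ = 0 := by
    rw [integral_finsetSum s fun i _ => (hL2 i).integrable one_le_two]
    simp [hmean]
  have hvarS : variance (∑ i ∈ s, Z i) μ ≤ #s * v := by
    rw [IndepFun.variance_sum (fun i _ => hL2 i) fun i _ j _ hij => hindep hij]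
    simpa using Finset.sum_le_card_nsmul s _ v fun i _ => hvar i
  calc μ {ω | ε ≤ |∑ i ∈ s, Z i ω|}
      = μ {ω | ε ≤ |(∑ i ∈ s, Z i) ω - μ[∑ i ∈ s, Z i]|} := by simp [Finset.sum_apply, hmeanS]
    _ ≤ ENNReal.ofReal (variance (∑ i ∈ s, Z i) μ / ε ^ 2) :=
      meas_ge_le_variance_div_sq (memLp_finsetSum' s fun i _ => hL2 i) hε
    _ ≤ ENNReal.ofReal (#s * v / ε ^ 2) := by gcongr

theorem tendstoInMeasure_sum_div (hL2 : ∀ i, MemLp (Z i) 2 μ) (hmean : ∀ i, μ[Z i] = 0)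
    (hvar : ∀ i, variance (Z i) μ ≤ v) (hindep : Pairwise fun i j => IndepFun (Z i) (Z j) μ)
    {ι : Type*} {l : Filter ι} {s : ι → Finset β} {k : ι → ℕ} (hk : ∀ i, #(s i) = k i)
    (hk_tendsto : Tendsto k l atTop) :
    TendstoInMeasure μ (fun i ω => (∑ j ∈ s i, Z j ω) / k i) l fun _ => 0 := by
  rw [tendstoInMeasure_iff_dist]
  intro ε hε
  have hbound : ∀ᶠ i in l, μ {ω | ε ≤ dist ((∑ j ∈ s i, Z j ω) / k i) 0} ≤
      ENNReal.ofReal (v / ε ^ 2 / k i) := by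
    filter_upwards [hk_tendsto.eventually_gt_atTop 0] with i hi
    have hk0 : (0 : ℝ) < k i := by exact_mod_cast hi
    calc μ {ω | ε ≤ dist ((∑ j ∈ s i, Z j ω) / k i) 0}
        = μ {ω | k i * ε ≤ |∑ j ∈ s i, Z j ω|} := by
          simp only [Real.dist_eq, sub_zero, abs_div, Nat.abs_cast, le_div_iff₀ hk0, mul_comm]
      _ ≤ ENNReal.ofReal (#(s i) * v / (k i * ε) ^ 2) :=
          meas_ge_abs_sum_le_card_mul_div_sq hL2 hmean hvar hindep (s i) (by positivity)
      _ = ENNReal.ofReal (v / ε ^ 2 / k i) := by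
          rw [hk]
          congr 1
          field_simp
  have hlim : Tendsto (fun i => ENNReal.ofReal (v / ε ^ 2 / k i)) l (𝓝 0) := by
    simpa using ENNReal.tendsto_ofReal
      (tendsto_const_nhds.div_atTop (tendsto_natCast_atTop_atTop.comp hk_tendsto))
  exact tendsto_of_tendsto_of_tendsto_of_le_of_le' tendsto_const_nhds hlim
    (Eventually.of_forall fun _ => zero_le) hbound

end WeakLaw

theorem Finset.sum_sq_sub_mean_sq {ι : Type*} (s : Finset ι) (f : ι → ℝ) :
    ∑ i ∈ s, (f i - (∑ j ∈ s, f j) / #s) ^ 2 = ∑ i ∈ s, f i ^ 2 - (∑ j ∈ s, f j) ^ 2 / #s := by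
  rcases s.eq_empty_or_nonempty with rfl | hs
  · simp
  have hcard : (#s : ℝ) ≠ 0 := by positivity
  simp only [sub_sq, sum_add_distrib, sum_sub_distrib, ← sum_mul, ← mul_sum, sum_const,
    nsmul_eq_mul]
  field_simp
  ring

theorem sum_Icc_one_two_mul (c : ℕ) (f : ℕ → ℝ) :
    ∑ i ∈ Icc 1 (2 * c), f i = ∑ i ∈ Icc 1 c, f i + ∑ i ∈ Ioc c (2 * c), f i := by
  rw [← zero_add 1, Icc_add_one_left_eq_Ioc, Icc_add_one_left_eq_Ioc,
    sum_Ioc_consecutive _ c.zero_le (by omega)]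

theorem card_Ioc_two_mul (c : ℕ) : #(Ioc c (2 * c)) = c := by
  simp [two_mul]

theorem sum_Ysig (μ0 : ℝ) (c : ℕ) (z : ℕ → ℝ) (g : ℝ → ℝ) :
    ∑ i ∈ Icc 1 (2 * c), g (Ysig μ0 c z i) =
      ∑ i ∈ Icc 1 c, g (z i) + ∑ i ∈ Ioc c (2 * c), g (μ0 + z i) := by
  rw [sum_Icc_one_two_mul]
  congr 1 <;> refine sum_congr rfl fun i hi => ?_
  · simp [Ysig, (mem_Icc.mp hi).2.not_gt]
  · simp [Ysig, (mem_Ioc.mp hi).1]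

noncomputable def leftMean (c : ℕ) (z : ℕ → ℝ) : ℝ := (∑ i ∈ Icc 1 c, z i) / c

noncomputable def rightMean (c : ℕ) (z : ℕ → ℝ) : ℝ := (∑ i ∈ Ioc c (2 * c), z i) / c

theorem rss0_sub_sum_sq_div (μ0 : ℝ) {c : ℕ} (hc : c ≠ 0) (z : ℕ → ℝ) :
    (RSS0 μ0 c z - ∑ i ∈ Icc 1 (2 * c), z i ^ 2) / c =
      μ0 ^ 2 / 2 + μ0 * (rightMean c z - leftMean c z) -
        (leftMean c z + rightMean c z) ^ 2 / 2 := by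
  have hcard : 2 * (c : ℝ) = #(Icc 1 (2 * c)) := by simp
  have hsum := sum_Ysig μ0 c z id
  have hsq := sum_Ysig μ0 c z (· ^ 2)
  simp only [id] at hsum hsq
  rw [RSS0, hcard, Finset.sum_sq_sub_mean_sq, hsum, hsq, ← hcard, sum_Icc_one_two_mul c (z · ^ 2)]
  simp only [add_sq, sum_add_distrib, sum_const, ← mul_sum, card_Ioc_two_mul,
    nsmul_eq_mul, leftMean, rightMean]
  field_simp
  ring

theorem rss1_le_sum_sq (c : ℕ) (z : ℕ → ℝ) : RSS1 c z ≤ ∑ i ∈ Icc 1 (2 * c), z i ^ 2 := by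
  have h₁ := Finset.sum_sq_sub_mean_sq (Icc 1 c) z
  have h₂ := Finset.sum_sq_sub_mean_sq (Ioc c (2 * c)) z
  simp only [Nat.card_Icc, add_tsub_cancel_right, card_Ioc_two_mul] at h₁ h₂
  rw [RSS1, h₁, h₂, sum_Icc_one_two_mul]
  have : 0 ≤ (∑ j ∈ Icc 1 c, z j) ^ 2 / c + (∑ j ∈ Ioc c (2 * c), z j) ^ 2 / c := by positivity
  linarith

theorem lt_rss0_sub_rss1 {μ0 b t : ℝ} {c : ℕ} (hc : c ≠ 0) {z : ℕ → ℝ}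
    (hb : b ≤ (RSS0 μ0 c z - ∑ i ∈ Icc 1 (2 * c), z i ^ 2) / c) (ht : t < b * c) :
    t < RSS0 μ0 c z - RSS1 c z := by
  rw [le_div_iff₀ (by positivity)] at hb
  linarith [rss1_le_sum_sq c z]

theorem tendsto_cwin_atTop {α : ℝ} (hα : 0 < 1 + α) : Tendsto (cwin α) atTop atTop :=
  tendsto_nat_ceil_atTop.comp <|
    (tendsto_rpow_atTop hα).comp (tendsto_log_atTop.comp tendsto_natCast_atTop_atTop)

theorem eventually_mul_log_lt_mul_cwin (K : ℝ) {b : ℝ} (hb : 0 < b) {α : ℝ} (hα : 0 < α) :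
    ∀ᶠ n : ℕ in atTop, K * log n < b * cwin α n := by
  have hreal : ∀ᶠ x : ℝ in atTop, K * x < b * x ^ (1 + α) := by
    filter_upwards [eventually_gt_atTop 0,
      (tendsto_rpow_atTop hα).eventually_gt_atTop (K / b)] with x hx hxα
    rw [div_lt_iff₀' hb] at hxα
    calc K * x < b * x ^ α * x := by gcongr
      _ = b * x ^ (1 + α) := by rw [rpow_add hx, rpow_one]; ring
  filter_upwards [(tendsto_log_atTop.comp tendsto_natCast_atTop_atTop).eventually hreal]
    with n hn
  exact hn.trans_le (by gcongr; exact Nat.le_ceil _)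

theorem window_rss_limit_and_cost_reduction_general {Ω : Type*} [MeasurableSpace Ω]
    (μm : Measure Ω) [IsProbabilityMeasure μm] (σ : ℝ)
    (μ0 : ℝ) (hμ0 : μ0 ≠ 0) (α : ℝ) (hα : 0 < α)
    (Z : ℕ → Ω → ℝ) (hmeas : ∀ i, Measurable (Z i))
    (hindep : iIndepFun Z μm)
    (hlaw : ∀ i, μm.map (Z i) = gaussianReal 0 (Real.toNNReal (σ ^ 2))) :
    (∀ δ : ℝ, 0 < δ →
      Tendsto (fun n : ℕ =>
        μm {ω | δ <
          |(RSS0 μ0 (cwin α n) (fun i => Z i ω) -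
              ∑ i ∈ Finset.Icc 1 (2 * cwin α n), (Z i ω) ^ 2) / (cwin α n : ℝ) -
            μ0 ^ 2 / 2|})
        atTop (nhds 0)) ∧
    (∀ K : ℝ,
      Tendsto (fun n : ℕ =>
        μm {ω | K * Real.log n <
          RSS0 μ0 (cwin α n) (fun i => Z i ω) - RSS1 (cwin α n) (fun i => Z i ω)})
        atTop (nhds 1)) := by
  have hZ (i : ℕ) : HasLaw (Z i) (gaussianReal 0 (σ ^ 2).toNNReal) μm :=
    ⟨(hmeas i).aemeasurable, hlaw i⟩
  have hc : Tendsto (cwin α) atTop atTop := tendsto_cwin_atTop (by linarith)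
  have hmean {s : ℕ → Finset ℕ} (hs : ∀ n, #(s n) = cwin α n) :
      TendstoInMeasure μm (fun n ω => (∑ j ∈ s n, Z j ω) / cwin α n) atTop fun _ => 0 :=
    tendstoInMeasure_sum_div (fun i => (hZ i).hasGaussianLaw.memLp_two)
      (fun i => by rw [(hZ i).integral_eq, integral_id_gaussianReal])
      (fun i => ((hZ i).variance_eq.trans variance_id_gaussianReal).le)
      (fun _ _ hij => hindep.indepFun hij) hs hc
  have hlimit : TendstoInMeasure μm
      (fun n ω => (RSS0 μ0 (cwin α n) (fun i => Z i ω) -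
        ∑ i ∈ Icc 1 (2 * cwin α n), Z i ω ^ 2) / cwin α n) atTop fun _ => μ0 ^ 2 / 2 := by
    have hleft := hmean (s := fun n => Icc 1 (cwin α n)) (by simp)
    have hright := hmean (s := fun n => Ioc (cwin α n) (2 * cwin α n)) fun n => card_Ioc_two_mul _
    refine ((hleft.prodMk hright).comp_continuousAt_const
      (φ := fun p => μ0 ^ 2 / 2 + μ0 * (p.2 - p.1) - (p.1 + p.2) ^ 2 / 2)
      (by fun_prop)).congr' ?_ (by simp)
    filter_upwards [hc.eventually_ne_atTop 0] with n hn
    exact .of_forall fun ω => (rss0_sub_sum_sq_div μ0 hn _).symm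
  refine ⟨fun δ hδ => hlimit.tendsto_measure_lt_abs_sub hδ, fun K => ?_⟩
  refine tendsto_measure_one_of_compl_subset
    (hlimit.tendsto_measure_lt_abs_sub (δ := μ0 ^ 2 / 4) (by positivity)) ?_
  filter_upwards [hc.eventually_ne_atTop 0,
    eventually_mul_log_lt_mul_cwin K (b := μ0 ^ 2 / 4) (by positivity) hα] with n hn hK ω hω
  simp only [Set.mem_compl_iff, Set.mem_ofPred_eq, not_lt, abs_le] at hω
  exact lt_rss0_sub_rss1 hn (by linarith [hω.1]) hK

/-- Key estimate of Corollary A.3 (extending Yao 1988).  Data with a single mean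
change of size `μ0 ≠ 0`, i.i.d. `N(0, σ²)` noise, window of half-length
`c(n) = ⌈(log n)^(1+α)⌉` around the change.  Then
`(RSS(null) - Σ Z_j²)/c(n) → μ0²/2` in probability as `n → ∞`; consequently, for any
fixed penalty multiple `K`, the cost reduction from fitting the true changepoint
within this window eventually exceeds `K log n` with probability tending to `1`. -/
theorem window_rss_limit_and_cost_reduction {Ω : Type*} [MeasurableSpace Ω]
    (μm : Measure Ω) [IsProbabilityMeasure μm] (σ : ℝ) (hσ : 0 < σ)
    (μ0 : ℝ) (hμ0 : μ0 ≠ 0) (α : ℝ) (hα : 0 < α)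
    (Z : ℕ → Ω → ℝ) (hmeas : ∀ i, Measurable (Z i))
    (hindep : iIndepFun Z μm)
    (hlaw : ∀ i, μm.map (Z i) = gaussianReal 0 (Real.toNNReal (σ ^ 2))) :
    (∀ δ : ℝ, 0 < δ →
      Tendsto (fun n : ℕ =>
        μm {ω | δ <
          |(RSS0 μ0 (cwin α n) (fun i => Z i ω) -
              ∑ i ∈ Finset.Icc 1 (2 * cwin α n), (Z i ω) ^ 2) / (cwin α n : ℝ) -
            μ0 ^ 2 / 2|})
        atTop (nhds 0)) ∧
    (∀ K : ℝ,
      Tendsto (fun n : ℕ =>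
        μm {ω | K * Real.log n <
          RSS0 μ0 (cwin α n) (fun i => Z i ω) - RSS1 (cwin α n) (fun i => Z i ω)})
        atTop (nhds 1)) :=
  window_rss_limit_and_cost_reduction_general μm σ μ0 hμ0 α hα Z hmeas hindep hlaw
end
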